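/- arXiv:1511.04412 — 5 statements merged into one kernel-verified Lean document; each statement's English description precedes it below -/
import Mathlib

section
/- Let s : A → Set X be a family of sets such that for every pair a, b the sets s a and s b are either equal or disjoint, and let g : Set X → Set X satisfy: whenever s a and s b are disjoint, g (s a) and g (s b) are disjoint. Then for all subsets I, J of A, if ⋃_{a ∈ I} s a = ⋃_{b ∈ J} s b then ⋃_{a ∈ I} g (s a) = ⋃_{b ∈ J} g (s b). -/
lemma relabel_subset
    {A X : Type*} (s : A → Set X) (g : Set X → Set X)
    (hid : ∀ a b : A, s a = s b ∨ Disjoint (s a) (s b))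
    (hg : ∀ a b : A, Disjoint (s a) (s b) → Disjoint (g (s a)) (g (s b)))
    (I J : Set A)
    (h : ⋃ a ∈ I, s a ⊆ ⋃ b ∈ J, s b) :
    ⋃ a ∈ I, g (s a) ⊆ ⋃ b ∈ J, g (s b) := by
  refine Set.iUnion₂_subset fun a ha => ?_
  rcases Set.eq_empty_or_nonempty (s a) with he | ⟨x, hx⟩
  · have : Disjoint (g (s a)) (g (s a)) := hg a a (by simp [he])
    rw [disjoint_self, Set.bot_eq_empty] at this
    simp [this]
  · have hx' : x ∈ ⋃ b ∈ J, s b := h (Set.mem_biUnion ha hx)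
    rcases Set.mem_iUnion₂.mp hx' with ⟨b, hb, hxb⟩
    have heq : s a = s b := by
      rcases hid a b with h' | h'
      · exact h'
      · exact absurd (h'.ne_of_mem hx hxb) (by simp)
    rw [heq]
    exact Set.subset_biUnion_of_mem (u := fun b => g (s b)) hb

/-- **Lemma 2, identity-preservation part (Eq. 8).**  If the family `s` is
pairwise equal-or-disjoint and `g` preserves disjointness of the sets `s a`,
then equality of unions over index sets is preserved by relabeling with `g`. -/
theorem relabel_preserves_union_eq
    {A X : Type*} (s : A → Set X) (g : Set X → Set X)
    (hid : ∀ a b : A, s a = s b ∨ Disjoint (s a) (s b))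
    (hg : ∀ a b : A, Disjoint (s a) (s b) → Disjoint (g (s a)) (g (s b)))
    (I J : Set A)
    (h : ⋃ a ∈ I, s a = ⋃ b ∈ J, s b) :
    ⋃ a ∈ I, g (s a) = ⋃ b ∈ J, g (s b) := by
  exact le_antisymm (relabel_subset s g hid hg I J h.le)
    (relabel_subset s g hid hg J I h.ge)
end

section
/- Let V be a type of nodes with a well-founded child relation, let scope, scope' : V → Set X both satisfy the defining recursion (the value at every non-leaf node equals the union of the values at its children), and suppose scope' l = g (scope l) for every leaf l, where g : Set X → Set X. Assume that for every pair of leaves l, m the sets scope l and scope m are either equal or disjoint, and that whenever scope l and scope m are disjoint, g (scope l) and g (scope m) are disjoint. Then for every node v whose children all have the same scope (i.e., v is a complete sum node), the children of v all have the same scope'. -/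
/-- **Corollary 3, completeness-preservation half.**  Let `child` be a
well-founded child relation on the nodes `V`, and let `scope` and `scope'`
both satisfy the defining recursion (the value at every non-leaf node is the
union of the values at its children), with `scope' l = g (scope l)` at every
leaf `l`.  If the leaf scopes are pairwise equal-or-disjoint and `g` preserves
their disjointness, then every node whose children all have the same `scope`
(a complete sum node) also has children all with the same `scope'`. -/
theorem relabel_preserves_completeness
    {V X : Type*} (child : V → V → Prop) (hwf : WellFounded child)
    (scope scope' : V → Set X) (g : Set X → Set X)
    (hrec : ∀ v : V, (∃ u, child u v) →
      scope v = ⋃ u ∈ {u | child u v}, scope u)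
    (hrec' : ∀ v : V, (∃ u, child u v) →
      scope' v = ⋃ u ∈ {u | child u v}, scope' u)
    (hleaf : ∀ l : V, (∀ u, ¬ child u l) → scope' l = g (scope l))
    (hid : ∀ l m : V, (∀ u, ¬ child u l) → (∀ u, ¬ child u m) →
      scope l = scope m ∨ Disjoint (scope l) (scope m))
    (hg : ∀ l m : V, (∀ u, ¬ child u l) → (∀ u, ¬ child u m) →
      Disjoint (scope l) (scope m) → Disjoint (g (scope l)) (g (scope m))) :
    ∀ v : V, (∀ u w : V, child u v → child w v → scope u = scope w) →
      (∀ u w : V, child u v → child w v → scope' u = scope' w) := by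
  -- Any function satisfying the recursion is the union of its values on leaves below.
  have key : ∀ (f : V → Set X),
      (∀ v, (∃ u, child u v) → f v = ⋃ u ∈ {u | child u v}, f u) →
      ∀ v, f v = ⋃ l ∈ {l | Relation.ReflTransGen child l v ∧ ∀ u, ¬ child u l}, f l := by
    intro f hf v
    induction v using hwf.induction with
    | _ v ih =>
      by_cases hv : ∃ u, child u v
      · rw [hf v hv]
        ext x
        simp only [Set.mem_iUnion, Set.mem_setOf_eq, exists_prop]
        constructor
        · rintro ⟨u, hu, hx⟩
          rw [ih u hu] at hx
          simp only [Set.mem_iUnion, Set.mem_setOf_eq, exists_prop] at hx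
          obtain ⟨l, ⟨hl1, hl2⟩, hx⟩ := hx
          exact ⟨l, ⟨hl1.tail hu, hl2⟩, hx⟩
        · rintro ⟨l, ⟨hlv, hleafl⟩, hx⟩
          rcases hlv.cases_tail with h | ⟨c, hlc, hcv⟩
          · obtain ⟨u, hu⟩ := hv
            exact absurd hu (h ▸ hleafl u)
          · refine ⟨c, hcv, ?_⟩
            rw [ih c hcv]
            simp only [Set.mem_iUnion, Set.mem_setOf_eq, exists_prop]
            exact ⟨l, ⟨hlc, hleafl⟩, hx⟩
      · push_neg at hv
        have : {l | Relation.ReflTransGen child l v ∧ ∀ u, ¬ child u l} = {v} := by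
          ext l
          simp only [Set.mem_setOf_eq, Set.mem_singleton_iff]
          constructor
          · rintro ⟨hlv, -⟩
            rcases hlv.cases_tail with h | ⟨c, _, hcv⟩
            · exact h.symm
            · exact absurd hcv (hv c)
          · rintro rfl
            exact ⟨Relation.ReflTransGen.refl, hv⟩
        rw [this]
        simp
  intro v hcomp
  have sub : ∀ a b : V, child a v → child b v → scope' a ⊆ scope' b := by
    intro a b ha hb x hx
    rw [key scope' hrec' a] at hx
    simp only [Set.mem_iUnion, Set.mem_setOf_eq, exists_prop] at hx
    obtain ⟨l, ⟨hla, hl⟩, hx⟩ := hx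
    rw [hleaf l hl] at hx
    rcases Set.eq_empty_or_nonempty (scope l) with he | ⟨y, hy⟩
    · exfalso
      have hd : Disjoint (scope l) (scope l) := by rw [he]; exact disjoint_bot_left
      have := Set.disjoint_left.mp (hg l l hl hl hd) hx hx
      exact this
    · have hya : y ∈ scope a := by
        rw [key scope hrec a]
        simp only [Set.mem_iUnion, Set.mem_setOf_eq, exists_prop]
        exact ⟨l, ⟨hla, hl⟩, hy⟩
      have hyb : y ∈ scope b := (hcomp a b ha hb) ▸ hya
      rw [key scope hrec b] at hyb
      simp only [Set.mem_iUnion, Set.mem_setOf_eq, exists_prop] at hyb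
      obtain ⟨m, ⟨hmb, hm⟩, hym⟩ := hyb
      have heq : scope l = scope m := by
        rcases hid l m hl hm with h | h
        · exact h
        · exact absurd h (Set.not_disjoint_iff.mpr ⟨y, hy, hym⟩)
      rw [key scope' hrec' b]
      simp only [Set.mem_iUnion, Set.mem_setOf_eq, exists_prop]
      refine ⟨m, ⟨hmb, hm⟩, ?_⟩
      rw [hleaf m hm, ← heq]
      exact hx
  intro u w hu hw
  exact Set.Subset.antisymm (sub u w hu hw) (sub w u hw hu)
end

section
/- Let V be a type of nodes with a well-founded child relation, let scope, scope' : V → Set X both satisfy the defining recursion (the value at every non-leaf node equals the union of the values at its children), and suppose scope' l = g (scope l) for every leaf l, where g : Set X → Set X. Assume that for every pair of leaves l, m the sets scope l and scope m are either equal or disjoint, and that whenever scope l and scope m are disjoint, g (scope l) and g (scope m) are disjoint. Then for every node v whose children have pairwise disjoint scopes (i.e., v is a decomposable product node), the children of v have pairwise disjoint scope'. -/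
/-- **Corollary 3, decomposability-preservation half.**  Let `child` be a
well-founded child relation on the nodes `V`, and let `scope` and `scope'`
both satisfy the defining recursion (the value at every non-leaf node is the
union of the values at its children), with `scope' l = g (scope l)` at every
leaf `l`.  If the leaf scopes are pairwise equal-or-disjoint and `g` preserves
their disjointness, then every node whose children have pairwise disjoint
`scope` (a decomposable product node) also has children with pairwise
disjoint `scope'`. -/
theorem relabel_preserves_decomposability
    {V X : Type*} (child : V → V → Prop) (hwf : WellFounded child)
    (scope scope' : V → Set X) (g : Set X → Set X)
    (hrec : ∀ v : V, (∃ u, child u v) →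
      scope v = ⋃ u ∈ {u | child u v}, scope u)
    (hrec' : ∀ v : V, (∃ u, child u v) →
      scope' v = ⋃ u ∈ {u | child u v}, scope' u)
    (hleaf : ∀ l : V, (∀ u, ¬ child u l) → scope' l = g (scope l))
    (hid : ∀ l m : V, (∀ u, ¬ child u l) → (∀ u, ¬ child u m) →
      scope l = scope m ∨ Disjoint (scope l) (scope m))
    (hg : ∀ l m : V, (∀ u, ¬ child u l) → (∀ u, ¬ child u m) →
      Disjoint (scope l) (scope m) → Disjoint (g (scope l)) (g (scope m))) :
    ∀ v : V,
      (∀ u w : V, child u v → child w v → u ≠ w →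
        Disjoint (scope u) (scope w)) →
      (∀ u w : V, child u v → child w v → u ≠ w →
        Disjoint (scope' u) (scope' w)) := by
  -- key: every scope-like function decomposes as the union over the leaves below
  have key : ∀ f : V → Set X,
      (∀ v : V, (∃ u, child u v) → f v = ⋃ u ∈ {u | child u v}, f u) →
      ∀ v : V, f v = ⋃ l ∈ {l | Relation.ReflTransGen child l v ∧ ∀ u, ¬ child u l}, f l := by
    intro f hf v
    induction v using WellFounded.induction hwf with
    | _ v ih =>
      by_cases h : ∃ u, child u v
      · rw [hf v h]
        ext x
        simp only [Set.mem_iUnion, Set.mem_setOf_eq]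
        constructor
        · rintro ⟨u, hu, hx⟩
          rw [ih u hu] at hx
          simp only [Set.mem_iUnion, Set.mem_setOf_eq] at hx
          obtain ⟨l, ⟨hlu, hleafl⟩, hx⟩ := hx
          exact ⟨l, ⟨hlu.tail hu, hleafl⟩, hx⟩
        · rintro ⟨l, ⟨hlv, hleafl⟩, hx⟩
          rcases hlv.cases_tail with heq | ⟨u, hlu, huv⟩
          · subst heq
            obtain ⟨u, hu⟩ := h
            exact absurd hu (hleafl u)
          · refine ⟨u, huv, ?_⟩
            rw [ih u huv]
            simp only [Set.mem_iUnion, Set.mem_setOf_eq]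
            exact ⟨l, ⟨hlu, hleafl⟩, hx⟩
      · push_neg at h
        ext x
        simp only [Set.mem_iUnion, Set.mem_setOf_eq]
        constructor
        · intro hx; exact ⟨v, ⟨Relation.ReflTransGen.refl, h⟩, hx⟩
        · rintro ⟨l, ⟨hlv, _⟩, hx⟩
          rcases hlv.cases_tail with heq | ⟨u, _, huv⟩
          · subst heq; exact hx
          · exact absurd huv (h u)
  have keyS := key scope hrec
  have keyS' := key scope' hrec'
  -- each leaf scope below v is contained in scope v
  have hsub : ∀ v l : V, Relation.ReflTransGen child l v → (∀ u, ¬ child u l) →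
      scope l ⊆ scope v := by
    intro v l hlv hleafl
    rw [keyS v]
    exact Set.subset_biUnion_of_mem (u := fun l => scope l) ⟨hlv, hleafl⟩
  intro v hdis u w hu hw hne
  rw [keyS' u, keyS' w]
  simp only [Set.disjoint_iUnion_left, Set.disjoint_iUnion_right, Set.mem_setOf_eq]
  rintro m ⟨hmw, hleafm⟩ l ⟨hlu, hleafl⟩
  rw [hleaf l hleafl, hleaf m hleafm]
  exact hg l m hleafl hleafm
    ((hdis u w hu hw hne).mono (hsub u l hlu hleafl) (hsub w m hmw hleafm))
end

section
/- Let s : A → Set X be a family of sets such that for every pair a, b the sets s a and s b are either equal or disjoint, and let g : Set X → Set X satisfy both: (s a = s b ↔ g (s a) = g (s b)) and (s a and s b are disjoint ↔ g (s a) and g (s b) are disjoint), for every pair a, b. Then for all subsets I, J of A: ⋃_{a ∈ I} s a = ⋃_{b ∈ J} s b if and only if ⋃_{a ∈ I} g (s a) = ⋃_{b ∈ J} g (s b). -/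
/-- For a pairwise equal-or-disjoint family, equality of unions is
equivalent to a purely combinatorial matching condition. -/
lemma union_eq_iff_cond {A X : Type*} (t : A → Set X)
    (hid : ∀ a b : A, t a = t b ∨ Disjoint (t a) (t b)) (I J : Set A) :
    (⋃ a ∈ I, t a) = (⋃ b ∈ J, t b) ↔
      ((∀ a ∈ I, (t a).Nonempty → ∃ b ∈ J, t b = t a) ∧
       (∀ b ∈ J, (t b).Nonempty → ∃ a ∈ I, t a = t b)) := by
  constructor
  · intro h
    constructor
    · intro a ha ⟨x, hx⟩
      have hxJ : x ∈ ⋃ b ∈ J, t b := by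
        rw [← h]; exact Set.mem_biUnion ha hx
      obtain ⟨b, hb, hxb⟩ := Set.mem_iUnion₂.1 hxJ
      refine ⟨b, hb, ?_⟩
      rcases hid b a with h' | h'
      · exact h'
      · exact absurd rfl (h'.ne_of_mem hxb hx)
    · intro b hb ⟨x, hx⟩
      have hxI : x ∈ ⋃ a ∈ I, t a := by
        rw [h]; exact Set.mem_biUnion hb hx
      obtain ⟨a, ha, hxa⟩ := Set.mem_iUnion₂.1 hxI
      refine ⟨a, ha, ?_⟩
      rcases hid a b with h' | h'
      · exact h'
      · exact absurd rfl (h'.ne_of_mem hxa hx)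
  · rintro ⟨h1, h2⟩
    apply Set.Subset.antisymm
    · intro x hx
      obtain ⟨a, ha, hxa⟩ := Set.mem_iUnion₂.1 hx
      obtain ⟨b, hb, hba⟩ := h1 a ha ⟨x, hxa⟩
      exact Set.mem_biUnion hb (hba ▸ hxa)
    · intro x hx
      obtain ⟨b, hb, hxb⟩ := Set.mem_iUnion₂.1 hx
      obtain ⟨a, ha, hab⟩ := h2 b hb ⟨x, hxb⟩
      exact Set.mem_biUnion ha (hab ▸ hxb)

/-- **Core step of Lemma 4 (identity part).**  If the family `s` is pairwise
equal-or-disjoint and the relabeling `g` preserves and reflects both equality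
and disjointness of the sets `s a` (the invariance conditions of
Definition 5), then equality of unions over index sets holds before
relabeling iff it holds after relabeling. -/
theorem relabel_union_eq_iff
    {A X : Type*} (s : A → Set X) (g : Set X → Set X)
    (hid : ∀ a b : A, s a = s b ∨ Disjoint (s a) (s b))
    (hgeq : ∀ a b : A, s a = s b ↔ g (s a) = g (s b))
    (hgdisj : ∀ a b : A, Disjoint (s a) (s b) ↔ Disjoint (g (s a)) (g (s b))) :
    ∀ I J : Set A,
      (⋃ a ∈ I, s a) = (⋃ b ∈ J, s b) ↔
        (⋃ a ∈ I, g (s a)) = (⋃ b ∈ J, g (s b)) := by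
  intro I J
  have hid' : ∀ a b : A, g (s a) = g (s b) ∨ Disjoint (g (s a)) (g (s b)) := by
    intro a b
    rcases hid a b with h | h
    · exact Or.inl ((hgeq a b).1 h)
    · exact Or.inr ((hgdisj a b).1 h)
  have hne : ∀ a : A, (s a).Nonempty ↔ (g (s a)).Nonempty := by
    intro a
    have h0 : s a = ∅ ↔ g (s a) = ∅ := by
      constructor
      · intro h
        simpa using disjoint_self.mp ((hgdisj a a).mp (by simp [h]))
      · intro h
        simpa using disjoint_self.mp ((hgdisj a a).mpr (by simp [h]))
    rw [Set.nonempty_iff_ne_empty, Set.nonempty_iff_ne_empty]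
    exact not_congr h0
  rw [union_eq_iff_cond s hid, union_eq_iff_cond (fun a => g (s a)) hid']
  constructor
  · rintro ⟨h1, h2⟩
    refine ⟨fun a ha hna => ?_, fun b hb hnb => ?_⟩
    · obtain ⟨b, hb, hba⟩ := h1 a ha ((hne a).2 hna)
      exact ⟨b, hb, (hgeq b a).1 hba⟩
    · obtain ⟨a, ha, hab⟩ := h2 b hb ((hne b).2 hnb)
      exact ⟨a, ha, (hgeq a b).1 hab⟩
  · rintro ⟨h1, h2⟩
    refine ⟨fun a ha hna => ?_, fun b hb hnb => ?_⟩
    · obtain ⟨b, hb, hba⟩ := h1 a ha ((hne a).1 hna)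
      exact ⟨b, hb, (hgeq b a).2 hba⟩
    · obtain ⟨a, ha, hab⟩ := h2 b hb ((hne b).1 hnb)
      exact ⟨a, ha, (hgeq a b).2 hab⟩
end

section
/- Let s : A → Set X be a family of sets such that for every pair a, b the sets s a and s b are either equal or disjoint, and let g : Set X → Set X satisfy both: (s a = s b ↔ g (s a) = g (s b)) and (s a and s b are disjoint ↔ g (s a) and g (s b) are disjoint), for every pair a, b. Then for all subsets I, J of A: ⋃_{a ∈ I} s a and ⋃_{b ∈ J} s b are disjoint if and only if ⋃_{a ∈ I} g (s a) and ⋃_{b ∈ J} g (s b) are disjoint. -/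
/-- **Core step of Lemma 4 (disjointness part).**  If the family `s` is
pairwise equal-or-disjoint and the relabeling `g` preserves and reflects both
equality and disjointness of the sets `s a` (the invariance conditions of
Definition 5), then disjointness of unions over index sets holds before
relabeling iff it holds after relabeling. -/
theorem relabel_union_disjoint_iff
    {A X : Type*} (s : A → Set X) (g : Set X → Set X)
    (hid : ∀ a b : A, s a = s b ∨ Disjoint (s a) (s b))
    (hgeq : ∀ a b : A, s a = s b ↔ g (s a) = g (s b))
    (hgdisj : ∀ a b : A, Disjoint (s a) (s b) ↔ Disjoint (g (s a)) (g (s b))) :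
    ∀ I J : Set A,
      Disjoint (⋃ a ∈ I, s a) (⋃ b ∈ J, s b) ↔
        Disjoint (⋃ a ∈ I, g (s a)) (⋃ b ∈ J, g (s b)) := by
  intro I J
  simp only [Set.disjoint_iUnion_left, Set.disjoint_iUnion_right]
  constructor <;> intro h a ha b hb
  · exact (hgdisj b a).mp (h a ha b hb)
  · exact (hgdisj b a).mpr (h a ha b hb)
end
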